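/- arXiv:1012.0864 — 7 statements merged into one kernel-verified Lean document; each statement's English description precedes it below -/
import Mathlib

section
/- Let T be a triangulated category, G an object, and f_i : X_{i-1} → X_i for 1 ≤ i ≤ t a sequence of morphisms in T such that each f_i is G-ghost (i.e. the induced map Hom(G[j], X_{i-1}) → Hom(G[j], X_i) is zero for all integers j). If the composition f_t ∘ ⋯ ∘ f_1 is nonzero, then X_0 does not lie in ⟨G⟩_{t-1}. -/
open CategoryTheory Limits Pretriangulated

universe v u

namespace OrlovSpec

variable (C : Type u) [Category.{v} C] [HasZeroObject C] [HasShift C ℤ]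
  [Preadditive C] [∀ n : ℤ, (shiftFunctor C n).Additive] [Pretriangulated C]
  [HasBinaryBiproducts C]

/-- `clos0 S` is the smallest class of objects containing `S` that is closed under
isomorphisms, shifts, finite coproducts and direct summands: this is `⟨S⟩₀`. -/
inductive clos0 (S : Set C) : Set C
  | of {X : C} (hX : X ∈ S) : clos0 S X
  | iso {X Y : C} (e : X ≅ Y) (hX : clos0 S X) : clos0 S Y
  | shift {X : C} (n : ℤ) (hX : clos0 S X) : clos0 S (X⟦n⟧)
  | biprod {X Y : C} (hX : clos0 S X) (hY : clos0 S Y) : clos0 S (X ⊞ Y)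
  | summand {X Y : C} (r : X ⟶ Y) (s : Y ⟶ X) (hrs : r ≫ s = 𝟙 X) (hY : clos0 S Y) :
      clos0 S X

/-- `star A B` consists of the extensions of objects of `B` by objects of `A`,
i.e. objects `X` fitting in a distinguished triangle `X₁ ⟶ X ⟶ X₂ ⟶ X₁[1]` with
`X₁ ∈ A` and `X₂ ∈ B`. -/
def star (A B : Set C) : Set C :=
  {X | ∃ (X₁ X₂ : C) (f : X₁ ⟶ X) (g : X ⟶ X₂) (h : X₂ ⟶ X₁⟦(1 : ℤ)⟧),
    Triangle.mk f g h ∈ (distTriang C) ∧ X₁ ∈ A ∧ X₂ ∈ B}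

/-- The operation `A ⋄ B`: the closure under isomorphisms, shifts, finite coproducts
and summands of the class of extensions of objects of `B` by objects of `A`. -/
def diamond (A B : Set C) : Set C := clos0 C (star C A B)

/-- `gen S n = ⟨S⟩ₙ`, the objects generated from `S` using at most `n` cones. -/
def gen (S : Set C) : ℕ → Set C
  | 0 => clos0 C S
  | (n + 1) => diamond C (gen S n) (clos0 C S)

variable {C}

/-- A morphism `f : X ⟶ Y` is `G`-ghost if the induced map
`Hom(G⟦j⟧, X) → Hom(G⟦j⟧, Y)` is zero for all `j : ℤ`. -/
def IsGhost (G : C) {X Y : C} (f : X ⟶ Y) : Prop :=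
  ∀ (j : ℤ) (α : (G⟦j⟧ : C) ⟶ X), α ≫ f = 0

/-- Composition of a chain of morphisms `X 0 ⟶ X 1 ⟶ ⋯ ⟶ X t`. -/
def chainComp (X : ℕ → C) (f : ∀ i, X i ⟶ X (i + 1)) : ∀ t, X 0 ⟶ X t
  | 0 => 𝟙 _
  | (t + 1) => chainComp X f t ≫ f t

end OrlovSpec

/-! A morphism `φ` is `W`-ghost exactly when all maps from shifts of `W` die after `φ`. For fixed
`φ` the class of such `W` is closed under the operations defining `⟨-⟩₀`, and along a distinguished
triangle `X₁ ⟶ X ⟶ X₂ ⟶ X₁⟦1⟧` the exact sequence `Hom(X₂⟦n⟧, -) ⟶ Hom(X⟦n⟧, -) ⟶ Hom(X₁⟦n⟧, -)`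
shows that `φ ≫ ψ` is `X`-ghost when `φ` is `X₁`-ghost and `ψ` is `X₂`-ghost. By induction every
composite of `n + 1` `G`-ghosts is `W`-ghost for `W ∈ ⟨G⟩ₙ`; but a nonzero map is never ghost for
its own source. -/

namespace OrlovSpec

variable {C : Type u} [Category.{v} C]

section

variable [HasShift C ℤ] [Preadditive C] {A B : C} {φ : A ⟶ B}

lemma IsGhost.eq_zero_of_self (h : IsGhost A φ) : φ = 0 := by
  simpa using (shiftFunctorZero C ℤ).inv.app A ≫= h 0 ((shiftFunctorZero C ℤ).hom.app A)

lemma IsGhost.of_retract {X Y : C} (h : IsGhost Y φ) (r : X ⟶ Y) (s : Y ⟶ X)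
    (hrs : r ≫ s = 𝟙 X) : IsGhost X φ := by
  intro n α
  have hα : α = r⟦n⟧' ≫ s⟦n⟧' ≫ α := by
    rw [← Functor.map_comp_assoc, hrs, CategoryTheory.Functor.map_id, Category.id_comp]
  rw [hα, Category.assoc, Category.assoc, ← Category.assoc _ α, h, comp_zero]

lemma IsGhost.shift {X : C} (h : IsGhost X φ) (m : ℤ) : IsGhost (X⟦m⟧) φ := by
  intro n α
  have hα : α = (shiftFunctorAdd C m n).inv.app X ≫ (shiftFunctorAdd C m n).hom.app X ≫ α := by
    simp
  rw [hα, Category.assoc, Category.assoc, ← Category.assoc _ α, h, comp_zero]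

lemma IsGhost.biprod [∀ n : ℤ, (shiftFunctor C n).Additive] {X Y : C} [HasBinaryBiproduct X Y]
    (hX : IsGhost X φ) (hY : IsGhost Y φ) : IsGhost (X ⊞ Y) φ := by
  intro n α
  have hα : α = (biprod.fst ≫ biprod.inl + biprod.snd ≫ biprod.inr : X ⊞ Y ⟶ X ⊞ Y)⟦n⟧' ≫ α := by
    rw [biprod.total, CategoryTheory.Functor.map_id, Category.id_comp]
  rw [hα, Functor.map_add, Functor.map_comp, Functor.map_comp, Preadditive.add_comp,
    Preadditive.add_comp, Category.assoc, Category.assoc, Category.assoc, Category.assoc,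
    ← Category.assoc _ α, ← Category.assoc _ α, hX, hY, comp_zero, comp_zero, add_zero]

lemma IsGhost.of_mem_clos0 [∀ n : ℤ, (shiftFunctor C n).Additive] [HasBinaryBiproducts C]
    {S : Set C} (hS : ∀ V ∈ S, IsGhost V φ) {W : C}
    (hW : W ∈ clos0 C S) : IsGhost W φ := by
  induction hW with
  | of hX => exact hS _ hX
  | iso e _ ih => exact ih.of_retract e.inv e.hom e.inv_hom_id
  | shift m _ ih => exact ih.shift m
  | biprod _ _ ihX ihY => exact ihX.biprod ihY
  | summand r s hrs _ ih => exact ih.of_retract r s hrs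

lemma IsGhost.comp_of_distTriang [HasZeroObject C] [∀ n : ℤ, (shiftFunctor C n).Additive]
    [Pretriangulated C] {X₁ X X₂ D : C} {f : X₁ ⟶ X} {g : X ⟶ X₂} {h : X₂ ⟶ X₁⟦(1 : ℤ)⟧}
    (hT : Triangle.mk f g h ∈ distTriang C) {ψ : B ⟶ D}
    (hφ : IsGhost X₁ φ) (hψ : IsGhost X₂ ψ) : IsGhost X (φ ≫ ψ) := by
  intro n α
  obtain ⟨β, hβ⟩ : ∃ β : X₂⟦n⟧ ⟶ B, α ≫ φ = (n.negOnePow • g⟦n⟧') ≫ β :=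
    Triangle.yoneda_exact₂ _ (Triangle.shift_distinguished _ hT n) (α ≫ φ) (by
      change (n.negOnePow • f⟦n⟧') ≫ α ≫ φ = 0
      rw [Linear.units_smul_comp, ← Category.assoc, hφ, smul_zero])
  rw [← Category.assoc, hβ, Category.assoc, Linear.units_smul_comp, hψ, comp_zero, smul_zero]

end

variable [HasZeroObject C] [HasShift C ℤ] [Preadditive C] [∀ n : ℤ, (shiftFunctor C n).Additive]
  [Pretriangulated C] [HasBinaryBiproducts C]

lemma isGhost_chainComp_of_mem_gen {G : C} (X : ℕ → C) (f : ∀ i, X i ⟶ X (i + 1)) :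
    ∀ n, (∀ i < n + 1, IsGhost G (f i)) → ∀ {W : C}, W ∈ gen C {G} n →
      IsGhost W (chainComp X f (n + 1))
  | 0, hghost, _, hW => by
    simpa [chainComp] using IsGhost.of_mem_clos0 (by simpa using hghost 0 one_pos) hW
  | n + 1, hghost, _, hW => by
    refine IsGhost.of_mem_clos0 ?_ hW
    rintro V ⟨X₁, X₂, _, _, _, hT, hX₁, hX₂⟩
    exact IsGhost.comp_of_distTriang hT
      (isGhost_chainComp_of_mem_gen X f n (fun i hi => hghost i (by omega)) hX₁)
      (IsGhost.of_mem_clos0 (by simpa using hghost (n + 1) (by omega)) hX₂)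

/-- The ghost lemma: if `f i : X i ⟶ X (i+1)` for `0 ≤ i < t` are all `G`-ghost and the
total composition `X 0 ⟶ X t` is nonzero, then `X 0 ∉ ⟨G⟩_{t-1}`. -/
theorem not_mem_gen_of_ghost_chain (G : C) (t : ℕ) (ht : 1 ≤ t)
    (X : ℕ → C) (f : ∀ i, X i ⟶ X (i + 1))
    (hghost : ∀ i < t, IsGhost G (f i))
    (hne : chainComp X f t ≠ 0) :
    X 0 ∉ gen C ({G} : Set C) (t - 1) := by
  obtain ⟨n, rfl⟩ : ∃ n, t = n + 1 := ⟨t - 1, by omega⟩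
  exact fun hX => hne (isGhost_chainComp_of_mem_gen X f n hghost hX).eq_zero_of_self

end OrlovSpec
end

section
/- Let T be a triangulated category and G an object of T. Suppose that for every object X of T there is a morphism ν_X : X_G → X with X_G ∈ ⟨G⟩_0 such that every morphism g : Y → X with Y ∈ ⟨G⟩_0 factors as g = ν_X ∘ h for some h : Y → X_G. If X ∉ ⟨G⟩_{t-1}, then there exists a sequence of morphisms f_i : X_{i-1} → X_i, 1 ≤ i ≤ t, with X_0 = X, each f_i being G-ghost, and f_t ∘ ⋯ ∘ f_1 ≠ 0. -/
open CategoryTheory Limits Pretriangulated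

universe v u

namespace OrlovSpec

variable (C : Type u) [Category.{v} C] [HasZeroObject C] [HasShift C ℤ]
  [Preadditive C] [∀ n : ℤ, (shiftFunctor C n).Additive] [Pretriangulated C]
  [HasBinaryBiproducts C]

variable {C}

/-!
Let `X = X₀ ⟶ X₁ ⟶ ⋯` be the tower in which `Xᵢ₊₁` is the cone of the `G`-approximation
`ν : Aᵢ ⟶ Xᵢ`. Each step is `G`-ghost: a map `G⟦j⟧ ⟶ Xᵢ` factors through `ν`, which the next
step kills. Conversely, any map `z` killed by the first `t + 1` steps factors through `⟨G⟩ₜ`: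
if `z ≫ c ≫ f = 0` with `f` the last step, then `z ≫ c` lifts to the approximation `A`
through some `φ`, the part of `z` over the fibre of `φ` factors through `⟨G⟩ₜ₋₁` by induction,
and gluing that factorisation with `A` yields an extension lying in `⟨G⟩ₜ` through which `z`
factors. So if the `t` steps composed to zero, `𝟙 X` would factor through `⟨G⟩ₜ₋₁`, and `X`
would be a summand of an object of `⟨G⟩ₜ₋₁`.
-/

def FactorsThrough (P : Set C) {Z X : C} (z : Z ⟶ X) : Prop :=
  ∃ (V : C) (_ : V ∈ P) (a : Z ⟶ V) (b : V ⟶ X), a ≫ b = z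

section Pretriangulated

omit [HasBinaryBiproducts C]

lemma exists_mor₁_comp_eq_of_mor₃_comp_shift_eq_zero {X₁ X₂ X₃ : C} {f : X₁ ⟶ X₂}
    {g : X₂ ⟶ X₃} {h : X₃ ⟶ X₁⟦(1 : ℤ)⟧} (hT : Triangle.mk f g h ∈ distTriang C) {X : C}
    (β : X₁ ⟶ X) (hβ : h ≫ β⟦(1 : ℤ)⟧' = 0) : ∃ ρ : X₂ ⟶ X, f ≫ ρ = β := by
  obtain ⟨k, hk⟩ : ∃ k : X₂⟦(1 : ℤ)⟧ ⟶ X⟦(1 : ℤ)⟧, β⟦(1 : ℤ)⟧' = (-f⟦(1 : ℤ)⟧') ≫ k :=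
    Triangle.yoneda_exact₂ _ (rot_of_distTriang _ (rot_of_distTriang _ hT)) _ hβ
  refine ⟨(shiftFunctor C (1 : ℤ)).preimage (-k), (shiftFunctor C (1 : ℤ)).map_injective ?_⟩
  simp [hk]

/-- `W` is a homotopy pushout of `α` and `p`, which is why `z` and `β` glue along it. -/
lemma exists_factorization_through_extension {F Z A X V : C} {p : F ⟶ Z} {φ : Z ⟶ A}
    {q : A ⟶ F⟦(1 : ℤ)⟧} (hT : Triangle.mk p φ q ∈ distTriang C) (z : Z ⟶ X) (α : F ⟶ V)
    (β : V ⟶ X) (hαβ : α ≫ β = p ≫ z) :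
    ∃ (W : C) (γ : V ⟶ W) (ε : W ⟶ A), Triangle.mk γ ε (q ≫ α⟦(1 : ℤ)⟧') ∈ distTriang C ∧
      ∃ (σ : Z ⟶ W) (ρ : W ⟶ X), σ ≫ ρ = z := by
  obtain ⟨W, γ, ε, hW⟩ := distinguished_cocone_triangle₂ (q ≫ α⟦(1 : ℤ)⟧')
  obtain ⟨σ, hpσ, hσε⟩ : ∃ σ : Z ⟶ W, p ≫ σ = α ≫ γ ∧ φ ≫ 𝟙 A = σ ≫ ε :=
    complete_distinguished_triangle_morphism₂ _ _ hT hW α (𝟙 A) (Category.id_comp _).symm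
  rw [Category.comp_id] at hσε
  have hqp : q ≫ p⟦(1 : ℤ)⟧' = 0 := comp_distTriang_mor_zero₃₁ _ hT
  obtain ⟨ρ, hγρ⟩ := exists_mor₁_comp_eq_of_mor₃_comp_shift_eq_zero hW β (by
    rw [Category.assoc, ← Functor.map_comp, hαβ, Functor.map_comp, reassoc_of% hqp, zero_comp])
  -- `z - σ ≫ ρ` vanishes on `F`, so it factors through `φ`, hence through `σ`.
  have hpz : p ≫ (z - σ ≫ ρ) = 0 := by
    rw [Preadditive.comp_sub, reassoc_of% hpσ, hγρ, hαβ, sub_self]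
  obtain ⟨ξ, hξ⟩ : ∃ ξ : A ⟶ X, z - σ ≫ ρ = φ ≫ ξ := Triangle.yoneda_exact₂ _ hT _ hpz
  refine ⟨W, γ, ε, hW, σ, ρ + ε ≫ ξ, ?_⟩
  rw [Preadditive.comp_add, ← Category.assoc, ← hσε, ← hξ, add_sub_cancel]

lemma isGhost_of_distTriang (G : C) {A Y Y' : C} {ν : A ⟶ Y} {f : Y ⟶ Y'}
    {w : Y' ⟶ A⟦(1 : ℤ)⟧} (hT : Triangle.mk ν f w ∈ distTriang C)
    (hν : ∀ (j : ℤ) (α : G⟦j⟧ ⟶ Y), ∃ h, h ≫ ν = α) : IsGhost G f := by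
  intro j α
  obtain ⟨h, rfl⟩ := hν j α
  rw [Category.assoc, show ν ≫ f = 0 from comp_distTriang_mor_zero₁₂ _ hT, comp_zero]

end Pretriangulated

variable {S : Set C}

lemma mem_gen_of_factorsThrough_id {n : ℕ} {X : C} (h : FactorsThrough (gen C S n) (𝟙 X)) :
    X ∈ gen C S n := by
  obtain ⟨V, hV, r, s, hrs⟩ := h
  cases n <;> exact clos0.summand r s hrs hV

lemma mem_gen_succ_of_distTriang {n : ℕ} {V W A : C} {γ : V ⟶ W} {ε : W ⟶ A}
    {δ : A ⟶ V⟦(1 : ℤ)⟧} (hT : Triangle.mk γ ε δ ∈ distTriang C) (hV : V ∈ gen C S n)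
    (hA : A ∈ gen C S 0) : W ∈ gen C S (n + 1) :=
  clos0.of ⟨V, A, γ, ε, δ, hT, hV, hA⟩

lemma factorsThrough_gen_succ {n : ℕ} {X₀ Y Y' A : C} {ν : A ⟶ Y} {f : Y ⟶ Y'}
    {w : Y' ⟶ A⟦(1 : ℤ)⟧} (hT : Triangle.mk ν f w ∈ distTriang C) (hA : A ∈ gen C S 0)
    (c : X₀ ⟶ Y) (ih : ∀ {Z : C} (z : Z ⟶ X₀), z ≫ c = 0 → FactorsThrough (gen C S n) z)
    {Z : C} (z : Z ⟶ X₀) (hz : z ≫ c ≫ f = 0) : FactorsThrough (gen C S (n + 1)) z := by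
  obtain ⟨φ, hφ⟩ : ∃ φ : Z ⟶ A, z ≫ c = φ ≫ ν :=
    Triangle.coyoneda_exact₂ _ hT (z ≫ c) ((Category.assoc _ _ _).trans hz)
  obtain ⟨F, p, q, hF⟩ := distinguished_cocone_triangle₁ φ
  have hpz : (p ≫ z) ≫ c = 0 := by
    have hpφ : p ≫ φ = 0 := comp_distTriang_mor_zero₁₂ _ hF
    rw [Category.assoc, hφ, reassoc_of% hpφ, zero_comp]
  obtain ⟨V, hV, α, β, hαβ⟩ := ih (p ≫ z) hpz
  obtain ⟨W, γ, ε, hW, σ, ρ, hσρ⟩ := exists_factorization_through_extension hF z α β hαβ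
  exact ⟨W, mem_gen_succ_of_distTriang hW hV hA, σ, ρ, hσρ⟩

lemma factorsThrough_gen_of_comp_chainComp_eq_zero {Xs A : ℕ → C} {ν : ∀ i, A i ⟶ Xs i}
    {f : ∀ i, Xs i ⟶ Xs (i + 1)} {w : ∀ i, Xs (i + 1) ⟶ (A i)⟦(1 : ℤ)⟧}
    (hT : ∀ i, Triangle.mk (ν i) (f i) (w i) ∈ distTriang C) (hA : ∀ i, A i ∈ gen C S 0)
    (t : ℕ) {Z : C} (z : Z ⟶ Xs 0) (hz : z ≫ chainComp Xs f (t + 1) = 0) :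
    FactorsThrough (gen C S t) z := by
  induction t generalizing Z with
  | zero =>
    obtain ⟨g, hg⟩ : ∃ g : Z ⟶ A 0, z = g ≫ ν 0 :=
      Triangle.coyoneda_exact₂ _ (hT 0) z (by simpa [chainComp] using hz : z ≫ f 0 = 0)
    exact ⟨A 0, hA 0, g, ν 0, hg.symm⟩
  | succ t ih =>
    exact factorsThrough_gen_succ (hT (t + 1)) (hA (t + 1)) _ (fun z hz => ih z hz) z
      (by simpa [chainComp] using hz)

/-- Converse to the ghost lemma: if `G`-approximations exist and `X ∉ ⟨G⟩_{t-1}`, then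
there is a chain of `t` `G`-ghost maps starting at `X` with nonzero total composition. -/
theorem exists_ghost_chain_of_not_mem_gen (G : C)
    (happrox : ∀ X : C, ∃ (XG : C) (_ : XG ∈ gen C ({G} : Set C) 0) (ν : XG ⟶ X),
      ∀ (Y : C), Y ∈ gen C ({G} : Set C) 0 → ∀ g : Y ⟶ X, ∃ h : Y ⟶ XG, h ≫ ν = g)
    (t : ℕ) (ht : 1 ≤ t) (X : C) (hX : X ∉ gen C ({G} : Set C) (t - 1)) :
    ∃ (Xs : ℕ → C) (f : ∀ i, Xs i ⟶ Xs (i + 1)),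
      Xs 0 = X ∧ (∀ i < t, IsGhost G (f i)) ∧ chainComp Xs f t ≠ 0 := by
  choose XG hXG ν hν using happrox
  choose cone f w hT using fun Y : C => distinguished_cocone_triangle (ν Y)
  let Xs : ℕ → C := fun n => Nat.rec X (fun _ Y => cone Y) n
  refine ⟨Xs, fun i => f (Xs i), rfl, fun i _ => isGhost_of_distTriang G (hT (Xs i))
    fun j α => hν _ _ (clos0.shift j (clos0.of rfl)) α, fun h0 => hX ?_⟩
  obtain ⟨s, rfl⟩ := Nat.exists_eq_add_of_le' ht
  exact mem_gen_of_factorsThrough_id (factorsThrough_gen_of_comp_chainComp_eq_zero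
    (fun i => hT (Xs i)) (fun i => hXG (Xs i)) s (𝟙 X) (by rw [Category.id_comp, h0]))

end OrlovSpec
end

section
/- Let T be a triangulated category of finite Rouquier dimension, i.e. there exist an object H and an integer d with T = ⟨H⟩_d. Then every generator of T is a strong generator: if G satisfies T = ⋃_{n≥0} ⟨G⟩_n, then there exists an integer m with T = ⟨G⟩_m. -/
open CategoryTheory Limits Pretriangulated

universe v u

namespace OrlovSpec

variable (C : Type u) [Category.{v} C] [HasZeroObject C] [HasShift C ℤ]
  [Preadditive C] [∀ n : ℤ, (shiftFunctor C n).Additive] [Pretriangulated C]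
  [HasBinaryBiproducts C]

variable {C}

/-!
Since `⟨G⟩_q ⋄ ⟨G⟩ₙ ⊆ ⟨G⟩_{q+n+1}`, induction on `k` gives `⟨H⟩ₖ ⊆ ⟨G⟩_{n+k(n+1)}` as soon as
`H ∈ ⟨G⟩ₙ`; with `T = ⟨H⟩_d` this bounds the number of cones needed for every object.

For the inclusion, every object of `⟨G⟩ₙ` is a summand of an `n`-fold extension of sums of
shifts of `G`, and these extensions are peeled off one at a time. If `X₁ → X → B` is
distinguished and `B` is an extension of `B₂` by `B₁`, the fibre `F → X` of `X → B₂` factors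
through `E ⊞ X₁`, where `E` is an extension of `B₁` by `X₁`; then `X` is a summand of
`E' ⊞ B₂` with `E'` an extension of `B₂` by `E ⊞ X₁`, which costs one more cone.
-/

open ZeroObject

section Closure

variable {S A B : Set C}

omit [HasZeroObject C] [∀ n : ℤ, (shiftFunctor C n).Additive] [Pretriangulated C] in
lemma clos0_mono (h : A ⊆ B) : clos0 C A ⊆ clos0 C B := by
  intro X hX
  induction hX with
  | of hX => exact clos0.of (h hX)
  | iso e _ ih => exact clos0.iso e ih
  | shift n _ ih => exact clos0.shift n ih
  | biprod _ _ ih₁ ih₂ => exact clos0.biprod ih₁ ih₂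
  | summand r s hrs _ ih => exact clos0.summand r s hrs ih

omit [HasZeroObject C] [∀ n : ℤ, (shiftFunctor C n).Additive] [Pretriangulated C] in
lemma clos0_clos0_subset : clos0 C (clos0 C A) ⊆ clos0 C A := by
  intro X hX
  induction hX with
  | of hX => exact hX
  | iso e _ ih => exact clos0.iso e ih
  | shift n _ ih => exact clos0.shift n ih
  | biprod _ _ ih₁ ih₂ => exact clos0.biprod ih₁ ih₂
  | summand r s hrs _ ih => exact clos0.summand r s hrs ih

lemma clos0_gen_subset {n : ℕ} : clos0 C (gen C S n) ⊆ gen C S n := by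
  cases n <;> exact clos0_clos0_subset

lemma clos0_subset_gen {n : ℕ} (h : A ⊆ gen C S n) : clos0 C A ⊆ gen C S n :=
  (clos0_mono h).trans clos0_gen_subset

variable {n : ℕ} {X Y : C}

lemma gen_biprod (hX : X ∈ gen C S n) (hY : Y ∈ gen C S n) : (X ⊞ Y) ∈ gen C S n :=
  clos0_gen_subset (clos0.biprod (clos0.of hX) (clos0.of hY))

lemma gen_of_retract (r : Retract X Y) (hY : Y ∈ gen C S n) : X ∈ gen C S n :=
  clos0_gen_subset (clos0.summand r.i r.r r.retract (clos0.of hY))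

omit [∀ n : ℤ, (shiftFunctor C n).Additive] [Pretriangulated C] in
lemma zero_mem_clos0 (hS : S.Nonempty) : (0 : C) ∈ clos0 C S :=
  clos0.summand 0 0 ((isZero_zero C).eq_of_src _ _) (clos0.of hS.some_mem)

lemma zero_mem_gen_of_mem (hX : X ∈ gen C S n) : (0 : C) ∈ gen C S n :=
  gen_of_retract ⟨0, 0, (isZero_zero C).eq_of_src _ _⟩ hX

lemma gen_subset_gen_succ (hS : S.Nonempty) : gen C S n ⊆ gen C S (n + 1) :=
  fun X hX => clos0.of ⟨X, 0, 𝟙 X, 0, 0, contractible_distinguished X, hX, zero_mem_clos0 hS⟩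

lemma clos0_subset_gen_succ (h₀ : (0 : C) ∈ gen C S n) : clos0 C S ⊆ gen C S (n + 1) :=
  fun X hX => clos0.of ⟨0, X, 0, 𝟙 X, 0, contractible_distinguished₁ X, h₀, hX⟩

lemma gen_mono (hS : S.Nonempty) {a b : ℕ} (hab : a ≤ b) : gen C S a ⊆ gen C S b := by
  induction hab with
  | refl => exact subset_rfl
  | step _ ih => exact ih.trans (gen_subset_gen_succ hS)

end Closure

section Triangles

noncomputable def piIsoBiprod (F : WalkingPair → C) :
    ∏ᶜ F ≅ F WalkingPair.left ⊞ F WalkingPair.right :=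
  HasLimit.isoOfNatIso (diagramIsoPair (Discrete.functor F)) ≪≫ (biprod.isoProd _ _).symm

omit [HasBinaryBiproducts C] in
lemma exists_distTriang_of_iso (T : Triangle C) (hT : T ∈ distTriang C) {X₁ X₂ X₃ : C}
    (e₁ : X₁ ≅ T.obj₁) (e₂ : X₂ ≅ T.obj₂) (e₃ : X₃ ≅ T.obj₃) :
    ∃ (f : X₁ ⟶ X₂) (g : X₂ ⟶ X₃) (h : X₃ ⟶ X₁⟦(1 : ℤ)⟧), Triangle.mk f g h ∈ distTriang C :=
  ⟨e₁.hom ≫ T.mor₁ ≫ e₂.inv, e₂.hom ≫ T.mor₂ ≫ e₃.inv, e₃.hom ≫ T.mor₃ ≫ e₁.inv⟦(1 : ℤ)⟧',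
    isomorphic_distinguished _ hT _ (Triangle.isoMk _ _ e₁ e₂ e₃
      (by show (e₁.hom ≫ T.mor₁ ≫ e₂.inv) ≫ e₂.hom = e₁.hom ≫ T.mor₁; simp)
      (by show (e₂.hom ≫ T.mor₂ ≫ e₃.inv) ≫ e₃.hom = e₂.hom ≫ T.mor₂; simp)
      (by show (e₃.hom ≫ T.mor₃ ≫ e₁.inv⟦1⟧') ≫ e₁.hom⟦1⟧' = e₃.hom ≫ T.mor₃
          simp [← Functor.map_comp]))⟩

lemma exists_distTriang_biprod (T₁ T₂ : Triangle C) (h₁ : T₁ ∈ distTriang C)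
    (h₂ : T₂ ∈ distTriang C) :
    ∃ (f : T₁.obj₁ ⊞ T₂.obj₁ ⟶ T₁.obj₂ ⊞ T₂.obj₂) (g : T₁.obj₂ ⊞ T₂.obj₂ ⟶ T₁.obj₃ ⊞ T₂.obj₃)
      (h : T₁.obj₃ ⊞ T₂.obj₃ ⟶ (T₁.obj₁ ⊞ T₂.obj₁)⟦(1 : ℤ)⟧),
      Triangle.mk f g h ∈ distTriang C := by
  let T : WalkingPair → Triangle C := fun j => WalkingPair.casesOn j T₁ T₂
  exact exists_distTriang_of_iso _
    (productTriangle_distinguished T (by rintro (_ | _) <;> assumption))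
    (piIsoBiprod fun j => (T j).obj₁).symm (piIsoBiprod fun j => (T j).obj₂).symm
    (piIsoBiprod fun j => (T j).obj₃).symm

variable {X₁ X X₃ : C} {a : X₁ ⟶ X} {b : X ⟶ X₃} {c : X₃ ⟶ X₁⟦(1 : ℤ)⟧}

lemma retract_biprod_of_comp_mor₂ (hT : Triangle.mk a b c ∈ distTriang C) {X' : C}
    (φ : X ⟶ X') (ψ : X' ⟶ X) (h : φ ≫ ψ ≫ b = b) : Nonempty (Retract X (X' ⊞ X₁)) := by
  obtain ⟨τ, hτ⟩ : ∃ τ : X ⟶ X₁, 𝟙 X - φ ≫ ψ = τ ≫ a :=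
    Triangle.coyoneda_exact₂ _ hT _ (by simp [h] : (𝟙 X - φ ≫ ψ) ≫ b = 0)
  exact ⟨⟨biprod.lift φ τ, biprod.desc ψ a, by simp [← hτ]⟩⟩

lemma retract_biprod_of_mor₁_comp (hT : Triangle.mk a b c ∈ distTriang C) {X' : C}
    (ψ : X ⟶ X') (σ : X' ⟶ X) (h : a ≫ ψ ≫ σ = a) : Nonempty (Retract X (X' ⊞ X₃)) := by
  obtain ⟨τ, hτ⟩ : ∃ τ : X₃ ⟶ X, 𝟙 X - ψ ≫ σ = b ≫ τ :=
    Triangle.yoneda_exact₂ _ hT _ (by simp [h] : a ≫ (𝟙 X - ψ ≫ σ) = 0)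
  exact ⟨⟨biprod.lift ψ b, biprod.desc σ τ, by simp [← hτ]⟩⟩

lemma retract_biprod_of_retracts (hT : Triangle.mk a b c ∈ distTriang C) {Y₁ X' P : C}
    (r₁ : Retract X₁ Y₁) (r₂ : Retract X₃ P) {a' : Y₁ ⟶ X'} {b' : X' ⟶ P}
    (hT' : Triangle.mk a' b' (r₂.r ≫ c ≫ r₁.i⟦(1 : ℤ)⟧') ∈ distTriang C) :
    Nonempty (Retract X (X' ⊞ X₁)) := by
  obtain ⟨φ, -, hφ⟩ : ∃ φ : X ⟶ X', a ≫ φ = r₁.i ≫ a' ∧ b ≫ r₂.i = φ ≫ b' :=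
    complete_distinguished_triangle_morphism₂ _ _ hT hT' r₁.i r₂.i
      (by show c ≫ r₁.i⟦(1 : ℤ)⟧' = r₂.i ≫ r₂.r ≫ c ≫ r₁.i⟦(1 : ℤ)⟧'; simp)
  obtain ⟨ψ, -, hψ⟩ : ∃ ψ : X' ⟶ X, a' ≫ ψ = r₁.r ≫ a ∧ b' ≫ r₂.r = ψ ≫ b :=
    complete_distinguished_triangle_morphism₂ _ _ hT' hT r₁.r r₂.r
      (by show (r₂.r ≫ c ≫ r₁.i⟦(1 : ℤ)⟧') ≫ r₁.r⟦(1 : ℤ)⟧' = r₂.r ≫ c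
          simp [← Functor.map_comp])
  exact retract_biprod_of_comp_mor₂ hT φ ψ (by rw [← hψ, ← reassoc_of% hφ]; simp)

lemma exists_factorization_through_biprod (hT : Triangle.mk a b c ∈ distTriang C)
    {B₁ B₂ : C} {i : B₁ ⟶ X₃} {p : X₃ ⟶ B₂} {δ : B₂ ⟶ B₁⟦(1 : ℤ)⟧}
    (hB : Triangle.mk i p δ ∈ distTriang C)
    {E : C} {j : X₁ ⟶ E} {k : E ⟶ B₁} (hE : Triangle.mk j k (i ≫ c) ∈ distTriang C)
    {F : C} (w : F ⟶ X) (hw : w ≫ b ≫ p = 0) :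
    ∃ (β : F ⟶ E ⊞ X₁) (v : E ⊞ X₁ ⟶ X), β ≫ v = w := by
  have hbc : b ≫ c = 0 := comp_distTriang_mor_zero₂₃ _ hT
  obtain ⟨e, he⟩ : ∃ e : F ⟶ B₁, w ≫ b = e ≫ i :=
    Triangle.coyoneda_exact₂ _ hB _ (by simpa using hw : (w ≫ b) ≫ p = 0)
  obtain ⟨φ, -, hφ⟩ : ∃ φ : E ⟶ X, j ≫ φ = 𝟙 X₁ ≫ a ∧ k ≫ i = φ ≫ b :=
    complete_distinguished_triangle_morphism₂ _ _ hE hT (𝟙 X₁) i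
      (by show (i ≫ c) ≫ (𝟙 X₁)⟦(1 : ℤ)⟧' = i ≫ c; simp)
  obtain ⟨σ, hσ⟩ : ∃ σ : F ⟶ E, e = σ ≫ k :=
    Triangle.coyoneda_exact₃ _ hE e (by simp [← reassoc_of% he, hbc] : e ≫ i ≫ c = 0)
  obtain ⟨τ, hτ⟩ : ∃ τ : F ⟶ X₁, w - σ ≫ φ = τ ≫ a :=
    Triangle.coyoneda_exact₂ _ hT _ (by simp [he, hσ, hφ] : (w - σ ≫ φ) ≫ b = 0)
  exact ⟨biprod.lift σ τ, biprod.desc φ a, by simp [← hτ]⟩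

end Triangles

noncomputable def retractBiprod {X X' Y Y' : C} (r : Retract X X') (r' : Retract Y Y') :
    Retract (X ⊞ Y) (X' ⊞ Y') where
  i := biprod.map r.i r'.i
  r := biprod.map r.r r'.r

def retracts (P : Set C) : Set C := {X | ∃ Y ∈ P, Nonempty (Retract X Y)}

omit [HasZeroObject C] [∀ n : ℤ, (shiftFunctor C n).Additive] [Pretriangulated C] in
lemma clos0_subset_retracts {A P : Set C} (hshift : ∀ X ∈ P, ∀ m : ℤ, X⟦m⟧ ∈ P)
    (hbiprod : ∀ X ∈ P, ∀ Y ∈ P, (X ⊞ Y) ∈ P) (hA : A ⊆ retracts P) :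
    clos0 C A ⊆ retracts P := by
  intro X hX
  induction hX with
  | of hX => exact hA hX
  | iso e _ ih =>
    obtain ⟨Y, hY, ⟨r⟩⟩ := ih
    exact ⟨Y, hY, ⟨(Retract.ofIso e.symm).trans r⟩⟩
  | shift m _ ih =>
    obtain ⟨Y, hY, ⟨r⟩⟩ := ih
    exact ⟨Y⟦m⟧, hshift Y hY m, ⟨r.map (shiftFunctor C m)⟩⟩
  | biprod _ _ ih₁ ih₂ =>
    obtain ⟨Y₁, hY₁, ⟨r₁⟩⟩ := ih₁
    obtain ⟨Y₂, hY₂, ⟨r₂⟩⟩ := ih₂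
    exact ⟨Y₁ ⊞ Y₂, hbiprod Y₁ hY₁ Y₂ hY₂, ⟨retractBiprod r₁ r₂⟩⟩
  | summand r s hrs _ ih =>
    obtain ⟨Y, hY, ⟨r'⟩⟩ := ih
    exact ⟨Y, hY, ⟨(⟨r, s, hrs⟩ : Retract _ _).trans r'⟩⟩

section Star

variable {A B : Set C}

omit [HasBinaryBiproducts C] in
lemma star_shift (hA : ∀ X ∈ A, ∀ m : ℤ, X⟦m⟧ ∈ A) (hB : ∀ X ∈ B, ∀ m : ℤ, X⟦m⟧ ∈ B) :
    ∀ X ∈ star C A B, ∀ m : ℤ, X⟦m⟧ ∈ star C A B := by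
  rintro X ⟨X₁, X₂, f, g, h, hT, h₁, h₂⟩ m
  exact ⟨X₁⟦m⟧, X₂⟦m⟧, _, _, _, Triangle.shift_distinguished _ hT m, hA _ h₁ m, hB _ h₂ m⟩

lemma star_biprod (hA : ∀ X ∈ A, ∀ Y ∈ A, (X ⊞ Y) ∈ A)
    (hB : ∀ X ∈ B, ∀ Y ∈ B, (X ⊞ Y) ∈ B) :
    ∀ X ∈ star C A B, ∀ Y ∈ star C A B, (X ⊞ Y) ∈ star C A B := by
  rintro X ⟨X₁, X₂, f, g, h, hT, h₁, h₂⟩ Y ⟨Y₁, Y₂, f', g', h', hT', h₁', h₂'⟩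
  obtain ⟨f'', g'', h'', hT''⟩ := exists_distTriang_biprod _ _ hT hT'
  exact ⟨X₁ ⊞ Y₁, X₂ ⊞ Y₂, f'', g'', h'', hT'', hA _ h₁ _ h₁', hB _ h₂ _ h₂'⟩

end Star

section StrictGen

variable {S : Set C}

inductive shiftSums (S : Set C) : Set C
  | zero : shiftSums S 0
  | of {X : C} (hX : X ∈ S) : shiftSums S X
  | shift (m : ℤ) {X : C} (hX : shiftSums S X) : shiftSums S (X⟦m⟧)
  | biprod {X Y : C} (hX : shiftSums S X) (hY : shiftSums S Y) : shiftSums S (X ⊞ Y)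

/-- `⟨S⟩ₙ` without the summand closure: `n`-fold extensions of finite sums of shifts. -/
def strictGen (S : Set C) : ℕ → Set C
  | 0 => shiftSums S
  | n + 1 => star C (strictGen S n) (shiftSums S)

omit [∀ n : ℤ, (shiftFunctor C n).Additive] [Pretriangulated C] in
lemma shiftSums_subset_clos0 (hS : S.Nonempty) : shiftSums S ⊆ clos0 C S := by
  intro X hX
  induction hX with
  | zero => exact zero_mem_clos0 hS
  | of hX => exact clos0.of hX
  | shift m _ ih => exact clos0.shift m ih
  | biprod _ _ ih₁ ih₂ => exact clos0.biprod ih₁ ih₂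

lemma strictGen_shift : ∀ n, ∀ X ∈ strictGen S n, ∀ m : ℤ, X⟦m⟧ ∈ strictGen S n
  | 0 => fun _ hX m => shiftSums.shift m hX
  | n + 1 => star_shift (strictGen_shift n) fun _ hX m => shiftSums.shift m hX

lemma strictGen_biprod : ∀ n, ∀ X ∈ strictGen S n, ∀ Y ∈ strictGen S n, (X ⊞ Y) ∈ strictGen S n
  | 0 => fun _ hX _ hY => shiftSums.biprod hX hY
  | n + 1 => star_biprod (strictGen_biprod n) fun _ hX _ hY => shiftSums.biprod hX hY

lemma strictGen_subset_succ {n : ℕ} : strictGen S n ⊆ strictGen S (n + 1) :=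
  fun X hX => ⟨X, 0, 𝟙 X, 0, 0, contractible_distinguished X, hX, shiftSums.zero⟩

omit [∀ n : ℤ, (shiftFunctor C n).Additive] [Pretriangulated C] in
lemma clos0_subset_retracts_shiftSums : clos0 C S ⊆ retracts (shiftSums S) :=
  clos0_subset_retracts (fun _ hX m => shiftSums.shift m hX)
    (fun _ hX _ hY => shiftSums.biprod hX hY) fun X hX => ⟨X, shiftSums.of hX, ⟨Retract.refl X⟩⟩

lemma gen_subset_retracts_strictGen : ∀ {n : ℕ}, gen C S n ⊆ retracts (strictGen S n)
  | 0 => clos0_subset_retracts_shiftSums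
  | n + 1 => by
    refine clos0_subset_retracts (strictGen_shift _) (strictGen_biprod _) ?_
    rintro X ⟨X₁, X₂, a, b, c, hT, h₁, h₂⟩
    obtain ⟨P₁, hP₁, ⟨r₁⟩⟩ := gen_subset_retracts_strictGen h₁
    obtain ⟨P₂, hP₂, ⟨r₂⟩⟩ := clos0_subset_retracts_shiftSums h₂
    obtain ⟨P, a', b', hT'⟩ := distinguished_cocone_triangle₂ (r₂.r ≫ c ≫ r₁.i⟦(1 : ℤ)⟧')
    obtain ⟨r⟩ := retract_biprod_of_retracts hT r₁ r₂ hT'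
    have hP : P ∈ strictGen S (n + 1) := ⟨P₁, P₂, a', b', _, hT', hP₁, hP₂⟩
    exact ⟨P ⊞ P₁, strictGen_biprod _ P hP P₁ (strictGen_subset_succ hP₁),
      ⟨r.trans (retractBiprod (Retract.refl P) r₁)⟩⟩

end StrictGen

lemma mem_gen_succ_of_factorization {S : Set C} {k : ℕ} {Z F X W : C} {u : Z ⟶ F}
    {w : F ⟶ X} {g : X ⟶ Z⟦(1 : ℤ)⟧} (hT : Triangle.mk u w g ∈ distTriang C)
    (hZ : Z⟦(1 : ℤ)⟧ ∈ clos0 C S) (hW : W ∈ gen C S k) (β : F ⟶ W) (v : W ⟶ X)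
    (hw : β ≫ v = w) : X ∈ gen C S (k + 1) := by
  have huw : u ≫ w = 0 := comp_distTriang_mor_zero₁₂ _ hT
  have hT' : Triangle.mk w g (-u⟦(1 : ℤ)⟧') ∈ distTriang C := rot_of_distTriang _ hT
  obtain ⟨E, j, e, hE⟩ := distinguished_cocone_triangle (u ≫ β)
  obtain ⟨ψ, hψ, -⟩ : ∃ ψ : X ⟶ E, w ≫ ψ = β ≫ j ∧ _ :=
    complete_distinguished_triangle_morphism _ _ hT hE (𝟙 Z) β (Category.id_comp _).symm
  obtain ⟨σ, hσ⟩ : ∃ σ : E ⟶ X, v = j ≫ σ :=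
    Triangle.yoneda_exact₂ _ hE v (by simp [hw, huw] : (u ≫ β) ≫ v = 0)
  obtain ⟨r⟩ := retract_biprod_of_mor₁_comp hT' ψ σ (by rw [reassoc_of% hψ, ← hσ, hw])
  have hE' : E ∈ gen C S (k + 1) := clos0.of ⟨W, _, j, e, _, rot_of_distTriang _ hE, hW, hZ⟩
  exact gen_of_retract r (gen_biprod hE' (clos0_subset_gen_succ (zero_mem_gen_of_mem hW) hZ))

section Absorption

variable {S : Set C}

lemma mem_gen_of_distTriang_strictGen (hS : S.Nonempty) {q : ℕ} :
    ∀ (n : ℕ) {X₁ X B : C} {a : X₁ ⟶ X} {b : X ⟶ B} {c : B ⟶ X₁⟦(1 : ℤ)⟧},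
      Triangle.mk a b c ∈ distTriang C → X₁ ∈ gen C S q → B ∈ strictGen S n →
      X ∈ gen C S (q + n + 1)
  | 0, X₁, X, B, a, b, c, hT, h₁, hB =>
    clos0.of ⟨X₁, B, a, b, c, hT, h₁, shiftSums_subset_clos0 hS hB⟩
  | n + 1, X₁, X, B, a, b, c, hT, h₁, ⟨B₁, B₂, i, p, δ, hB, hB₁, hB₂⟩ => by
    -- the fibre `F ⟶ X` of `b ≫ p`, with `B₂⟦-1⟧⟦1⟧` standing for `B₂`
    obtain ⟨F, u, w, hF⟩ :=
      distinguished_cocone_triangle₂ (b ≫ p ≫ (shiftNegShift B₂ (1 : ℤ)).inv)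
    have hw : w ≫ b ≫ p = 0 := by
      have : w ≫ b ≫ p ≫ (shiftNegShift B₂ (1 : ℤ)).inv = 0 := comp_distTriang_mor_zero₂₃ _ hF
      rwa [← cancel_mono (shiftNegShift B₂ (1 : ℤ)).inv, zero_comp, Category.assoc,
        Category.assoc]
    obtain ⟨E, j, k, hE⟩ := distinguished_cocone_triangle₂ (i ≫ c)
    obtain ⟨β, v, hβv⟩ := exists_factorization_through_biprod hT hB hE w hw
    have hE' : E ∈ gen C S (q + n + 1) := mem_gen_of_distTriang_strictGen hS n hE h₁ hB₁
    exact mem_gen_succ_of_factorization hF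
      (clos0.shift 1 (clos0.shift (-1) (shiftSums_subset_clos0 hS hB₂)))
      (gen_biprod hE' (gen_mono hS (by omega) h₁)) β v hβv

lemma mem_gen_of_distTriang (hS : S.Nonempty) {q n : ℕ} {X₁ X B : C} {a : X₁ ⟶ X} {b : X ⟶ B}
    {c : B ⟶ X₁⟦(1 : ℤ)⟧} (hT : Triangle.mk a b c ∈ distTriang C) (h₁ : X₁ ∈ gen C S q)
    (hB : B ∈ gen C S n) : X ∈ gen C S (q + n + 1) := by
  obtain ⟨P, hP, ⟨r⟩⟩ := gen_subset_retracts_strictGen hB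
  obtain ⟨X', a', b', hT'⟩ :=
    distinguished_cocone_triangle₂ (r.r ≫ c ≫ (Retract.refl X₁).i⟦(1 : ℤ)⟧')
  obtain ⟨r'⟩ := retract_biprod_of_retracts hT (Retract.refl X₁) r hT'
  exact gen_of_retract r' (gen_biprod (mem_gen_of_distTriang_strictGen hS n hT' h₁ hP)
    (gen_mono hS (by omega) h₁))

lemma gen_subset_gen_of_subset (hS : S.Nonempty) {A : Set C} {n : ℕ} (hA : A ⊆ gen C S n) :
    ∀ k, gen C A k ⊆ gen C S (n + k * (n + 1))
  | 0 => by rw [zero_mul, add_zero]; exact clos0_subset_gen hA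
  | k + 1 => by
    refine clos0_subset_gen ?_
    rintro X ⟨X₁, X₂, f, g, h, hT, h₁, h₂⟩
    have hX := mem_gen_of_distTriang hS hT (gen_subset_gen_of_subset hS hA k h₁)
      (clos0_subset_gen hA h₂)
    rwa [show n + k * (n + 1) + n + 1 = n + (k + 1) * (n + 1) by ring] at hX

end Absorption

/-- In a triangulated category of finite Rouquier dimension, every generator is a strong
generator. -/
theorem strong_of_gen (H : C) (d : ℕ) (hH : ∀ X : C, X ∈ gen C ({H} : Set C) d)
    (G : C) (hG : ∀ X : C, ∃ n : ℕ, X ∈ gen C ({G} : Set C) n) :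
    ∃ m : ℕ, ∀ X : C, X ∈ gen C ({G} : Set C) m := by
  obtain ⟨n, hn⟩ := hG H
  have hHG : ({H} : Set C) ⊆ gen C {G} n := Set.singleton_subset_iff.mpr hn
  exact ⟨n + d * (n + 1),
    fun X => gen_subset_gen_of_subset (Set.singleton_nonempty G) hHG d (hH X)⟩

end OrlovSpec
end

section
/- Let k be a field, n ≥ 1, and 1 ≤ i, j ≤ n, and let α^l : k[u]/(u^i) → k[u]/(u^j) be the k[u]/(u^n)-module homomorphism sending the class of 1 to the class of u^l, where max(0, j−i) ≤ l < j. Then α^l factors through a free k[u]/(u^n)-module if and only if l ≥ n − i. -/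
/-!
If `α^l = q ∘ p` through a free module `F`, then `x = p 1` is killed by `uⁱ`. The annihilator
of `uⁱ` in `k[u]/(uⁿ)` is `(u^(n-i))`, so the equational criterion for flatness makes `x`
divisible by `u^(n-i)` in `F`; hence `uˡ = q x` is divisible by `u^(n-i)` in `k[u]/(uʲ)`,
which for `l < j` forces `n - i ≤ l`. Conversely, if `n - i ≤ l` then `α^l` is multiplication
by `u^(n-i)` into `k[u]/(uⁿ)` followed by multiplication by `u^(l-(n-i))` onto `k[u]/(uʲ)`.
-/

set_option synthInstance.maxHeartbeats 1000000
set_option maxHeartbeats 1000000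

namespace AnSing

variable (k : Type) [Field k]

/-- The ring `k[u]/(uⁿ)`. -/
abbrev AnRing (n : ℕ) : Type := Polynomial k ⧸ (Ideal.span {(Polynomial.X : Polynomial k) ^ n})

/-- The class of `u` in `k[u]/(uⁿ)`. -/
noncomputable def uu (n : ℕ) : AnRing k n := Ideal.Quotient.mk _ Polynomial.X

/-- The `k[u]/(uⁿ)`-module `k[u]/(uⁱ)`. -/
abbrev Vmod (n i : ℕ) := AnRing k n ⧸ (Ideal.span {uu k n ^ i})

/-- The `k[u]/(uⁿ)`-module map `α^l : k[u]/(uⁱ) ⟶ k[u]/(uʲ)` sending the class of `1`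
to the class of `uˡ`; it is well defined as soon as `j ≤ i + l`. -/
noncomputable def alphaMap (n i j l : ℕ) (h : j ≤ i + l) :
    Vmod k n i →ₗ[AnRing k n] Vmod k n j :=
  Submodule.mapQ _ _ ((uu k n ^ l) • (LinearMap.id : AnRing k n →ₗ[AnRing k n] AnRing k n))
    (by
      refine (Submodule.span_singleton_le_iff_mem _ _).2 ?_
      simp only [Submodule.mem_comap, LinearMap.smul_apply, LinearMap.id_apply,
        smul_eq_mul]
      rw [← pow_add]
      exact Ideal.mem_span_singleton.2 (pow_dvd_pow _ (by omega)))

theorem _root_.Module.Flat.exists_eq_smul_of_smul_eq_zero {R M : Type*} [CommRing R]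
    [AddCommGroup M] [Module R M] [Module.Flat R M] {r s : R} (hrs : ∀ c, r * c = 0 → s ∣ c) {x : M}
    (hx : r • x = 0) : ∃ y, x = s • y := by
  obtain ⟨_, a, y, hxy, ha⟩ := Module.Flat.isTrivialRelation_of_sum_smul_eq_zero
    (f := fun _ : Unit => r) (x := fun _ => x) (by simpa using hx)
  choose d hd using fun j => hrs (a () j) (by simpa using ha j)
  refine ⟨∑ j, d j • y j, ?_⟩
  simp only [hxy (), Finset.smul_sum, smul_smul, hd]

section

open Polynomial

variable {k} {n : ℕ}

lemma uu_pow (n m : ℕ) : uu k n ^ m = Ideal.Quotient.mk _ ((X : k[X]) ^ m) := by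
  simp [uu, map_pow]

lemma uu_pow_self : uu k n ^ n = 0 := by
  rw [uu_pow, Ideal.Quotient.eq_zero_iff_mem]
  exact Ideal.subset_span rfl

lemma uu_pow_dvd_uu_pow_iff {l m : ℕ} (hl : l < n) : uu k n ^ m ∣ uu k n ^ l ↔ m ≤ l := by
  refine ⟨fun ⟨c, hc⟩ => ?_, fun h => pow_dvd_pow _ h⟩
  obtain ⟨g, rfl⟩ := Ideal.Quotient.mk_surjective c
  rw [uu_pow, uu_pow, ← map_mul, Ideal.Quotient.eq, Ideal.mem_span_singleton] at hc
  obtain ⟨f, hf⟩ := hc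
  have hdvd : (X : k[X]) ^ min m n ∣ X ^ l := by
    rw [← sub_add_cancel ((X : k[X]) ^ l) (X ^ m * g), hf]
    exact dvd_add (dvd_mul_of_dvd_left (pow_dvd_pow _ (min_le_right _ _)) _)
      (dvd_mul_of_dvd_left (pow_dvd_pow _ (min_le_left _ _)) _)
  have := (pow_dvd_pow_iff X_ne_zero not_isUnit_X).1 hdvd
  omega

lemma uu_pow_dvd_of_uu_pow_mul_eq_zero {i : ℕ} (hi : i ≤ n) {c : AnRing k n}
    (h : uu k n ^ i * c = 0) : uu k n ^ (n - i) ∣ c := by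
  obtain ⟨f, rfl⟩ := Ideal.Quotient.mk_surjective c
  rw [uu_pow, ← map_mul, Ideal.Quotient.eq_zero_iff_mem, Ideal.mem_span_singleton,
    ← Nat.add_sub_cancel' hi, pow_add] at h
  obtain ⟨g, rfl⟩ := (mul_dvd_mul_iff_left (pow_ne_zero i X_ne_zero)).1 h
  exact ⟨Ideal.Quotient.mk _ g, by rw [uu_pow, ← map_mul]⟩

lemma le_of_mk_uu_pow_eq_smul {j l m : ℕ} (hlj : l < j) (hln : l < n) {a : Vmod k n j}
    (h : Submodule.Quotient.mk (uu k n ^ l) = uu k n ^ m • a) : m ≤ l := by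
  obtain ⟨b, rfl⟩ := Submodule.Quotient.mk_surjective _ a
  rw [← Submodule.Quotient.mk_smul, Submodule.Quotient.eq, Ideal.mem_span_singleton] at h
  obtain ⟨c, hc⟩ := h
  have hdvd : uu k n ^ min m j ∣ uu k n ^ l := by
    rw [← sub_add_cancel (uu k n ^ l) (uu k n ^ m • b), hc, smul_eq_mul]
    exact dvd_add (dvd_mul_of_dvd_left (pow_dvd_pow _ (min_le_right _ _)) _)
      (dvd_mul_of_dvd_left (pow_dvd_pow _ (min_le_left _ _)) _)
  have := (uu_pow_dvd_uu_pow_iff hln).1 hdvd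
  omega

lemma uu_pow_smul_mk_one (i : ℕ) :
    uu k n ^ i • (Submodule.Quotient.mk 1 : Vmod k n i) = 0 := by
  rw [← Submodule.Quotient.mk_smul, smul_eq_mul, mul_one, Submodule.Quotient.mk_eq_zero]
  exact Ideal.subset_span rfl

lemma alphaMap_mk_one {i j l : ℕ} (h : j ≤ i + l) :
    alphaMap k n i j l h (Submodule.Quotient.mk 1) = Submodule.Quotient.mk (uu k n ^ l) := by
  rw [alphaMap, Submodule.mapQ_apply]
  simp

lemma exists_comp_eq_alphaMap {i j l : ℕ} (h : j ≤ i + l) (hl : n - i ≤ l) :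
    ∃ (p : Vmod k n i →ₗ[AnRing k n] AnRing k n) (q : AnRing k n →ₗ[AnRing k n] Vmod k n j),
      q.comp p = alphaMap k n i j l h := by
  refine ⟨Submodule.liftQ _ (uu k n ^ (n - i) • LinearMap.id) ?_,
    (Submodule.mkQ _).comp (uu k n ^ (l - (n - i)) • LinearMap.id), ?_⟩
  · refine (Submodule.span_singleton_le_iff_mem _ _).2 ?_
    rw [LinearMap.mem_ker, LinearMap.smul_apply, LinearMap.id_apply, smul_eq_mul, ← pow_add]
    exact pow_eq_zero_of_le (by omega) uu_pow_self
  · refine Submodule.linearMap_qext _ (LinearMap.ext fun a => ?_)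
    simp only [alphaMap, LinearMap.comp_apply, Submodule.mkQ_apply, Submodule.liftQ_apply,
      Submodule.mapQ_apply, LinearMap.smul_apply, LinearMap.id_apply, smul_eq_mul,
      ← mul_assoc, ← pow_add, Nat.sub_add_cancel hl]

end

/-- The map `α^l : k[u]/(uⁱ) → k[u]/(uʲ)`, `1 ↦ uˡ`, factors through a free
`k[u]/(uⁿ)`-module if and only if `l ≥ n - i`. -/
theorem alpha_factors_free_iff (n i j l : ℕ) (hl1 : j - i ≤ l) (hl2 : l < j) :
    (∃ (F : Type) (_ : AddCommGroup F) (_ : Module (AnRing k n) F),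
        Module.Free (AnRing k n) F ∧
        ∃ (p : Vmod k n i →ₗ[AnRing k n] F) (q : F →ₗ[AnRing k n] Vmod k n j),
          q.comp p = alphaMap k n i j l (by omega)) ↔ n - i ≤ l := by
  refine ⟨fun ⟨F, _, _, _, p, q, hqp⟩ => ?_, fun hl => ⟨AnRing k n, _, _, inferInstance,
    exists_comp_eq_alphaMap (by omega) hl⟩⟩
  by_contra! hli
  obtain ⟨y, hy⟩ : ∃ y, p (Submodule.Quotient.mk 1) = uu k n ^ (n - i) • y :=
    Module.Flat.exists_eq_smul_of_smul_eq_zero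
      (fun _ => uu_pow_dvd_of_uu_pow_mul_eq_zero (by omega))
      (by rw [← map_smul, uu_pow_smul_mk_one, map_zero])
  have hmk : Submodule.Quotient.mk (uu k n ^ l) = uu k n ^ (n - i) • q y := by
    rw [← alphaMap_mk_one (i := i) (by omega), ← hqp, LinearMap.comp_apply, hy, map_smul]
  exact hli.not_ge (le_of_mk_uu_pow_eq_smul hl2 (by omega) hmk)

end AnSing
end

section
/- Let R be a commutative ring equipped with derivations ∂_1, …, ∂_n, let w ∈ R, and let A, B be square matrices over R (of sizes p×q and q×p respectively) satisfying A·B = w·Id and B·A = w·Id. Then for each i one has (∂_i A)·B + A·(∂_i B) = (∂_i w)·Id and (∂_i B)·A + B·(∂_i A) = (∂_i w)·Id, where ∂_i is applied entrywise. In particular, in the homotopy category of matrix factorizations of w, the endomorphism (∂_i w)·Id of any matrix factorization is null-homotopic, with homotopy given by (∂_i A, ∂_i B). -/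
lemma deriv_matrix_mul {R : Type*} [CommRing R] (d : Derivation ℤ R R)
    {m n k : ℕ} (A : Matrix (Fin m) (Fin n) R) (B : Matrix (Fin n) (Fin k) R) :
    (A * B).map d = (A.map d) * B + A * (B.map d) := by
  ext i j
  simp [Matrix.mul_apply, Matrix.map_apply, ← Finset.sum_add_distrib, mul_comm, add_comm]

lemma deriv_smul_one {R : Type*} [CommRing R] (d : Derivation ℤ R R)
    {n : ℕ} (w : R) :
    ((w • (1 : Matrix (Fin n) (Fin n) R)).map d) = (d w) • 1 := by
  ext i j
  by_cases h : i = j <;> simp [Matrix.map_apply, Matrix.one_apply, h]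

/-- If `A·B = w·Id` and `B·A = w·Id` for matrices over a commutative ring `R` with a
derivation `∂`, then `(∂A)·B + A·(∂B) = (∂w)·Id` and `(∂B)·A + B·(∂A) = (∂w)·Id`
(with `∂` applied entrywise).  In the homotopy category of matrix factorizations of `w`,
this says that `(∂w)·Id` is null-homotopic, with homotopy given by `(∂A, ∂B)`. -/
theorem matrixFactorization_deriv {R : Type*} [CommRing R] (d : Derivation ℤ R R)
    (w : R) (p q : ℕ)
    (A : Matrix (Fin p) (Fin q) R) (B : Matrix (Fin q) (Fin p) R)
    (hAB : A * B = w • (1 : Matrix (Fin p) (Fin p) R))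
    (hBA : B * A = w • (1 : Matrix (Fin q) (Fin q) R)) :
    (A.map d) * B + A * (B.map d) = (d w) • (1 : Matrix (Fin p) (Fin p) R)
    ∧ (B.map d) * A + B * (A.map d) = (d w) • (1 : Matrix (Fin q) (Fin q) R) := by
  constructor
  · rw [← deriv_matrix_mul, hAB, deriv_smul_one]
  · rw [← deriv_matrix_mul, hBA, deriv_smul_one]
end

section
/- Let k be an algebraically closed field and T a k-linear, Karoubi closed (idempotent-complete) triangulated category with finite-dimensional morphism spaces admitting a Serre functor S. Let X be an indecomposable object of T and let ε_X : X → S(X) be the morphism corresponding, under the Serre duality isomorphism Hom(X, S(X)) ≅ Hom(X, X)^∨, to the linear functional Hom(X,X) → Hom(X,X)/Rad(X,X) ≅ k sending the identity to 1. Then for every morphism f : X → Y there exists g : Y → S(X) with g ∘ f = ε_X whenever f is nonzero; in particular any nonzero morphism out of X can be completed to ε_X. -/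
/-!
Pairing `End X` with `Hom(X, S X)` through `tr` is injective by nondegeneracy, and it is onto
since `dim End X ≤ dim Hom(X, S X) ≤ dim End (S X) ≤ dim End X`. The last step needs care because
`S` is only additive, so `End X ≃+* End (S X)` need not be `k`-linear. But `End (S X)` is a local
algebra (Fitting's lemma) with residue field `k`, so its dimension is at most its length over
itself; length is a ring invariant, and the length of `End X` is at most its dimension.
Hence every functional on `Hom(X, S X)` is `tr (r ≫ -)`. If it vanishes on all composites
`f ≫ g`, nondegeneracy gives `r ≫ f = 0`, so `r` is not invertible and the functional kills `ε_X`: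
thus `ε_X` is such a composite.
-/

open CategoryTheory Limits Pretriangulated

universe v u

open Module

section Fitting

variable {A : Type*} [Ring A] [IsArtinianRing A] [IsNoetherianRing A]

theorem isUnit_or_isNilpotent_of_forall_isIdempotentElem
    (hidem : ∀ e : A, IsIdempotentElem e → e = 0 ∨ e = 1) (a : A) :
    IsUnit a ∨ IsNilpotent a := by
  let f : Module.End A A := Module.toModuleEnd A A (MulOpposite.op a)
  have hf : ∀ n (x : A), (f ^ n) x = x * a ^ n := fun n x => by
    rw [← map_pow, ← MulOpposite.op_pow, Module.toModuleEnd_apply,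
      DistribSMul.toLinearMap_apply, MulOpposite.smul_eq_mul_unop, MulOpposite.unop_op]
  obtain ⟨N, hN⟩ := Filter.eventually_atTop.mp f.eventually_isCompl_ker_pow_range_pow
  set n := N + 1
  have hcompl := hN n N.le_succ
  obtain ⟨y, hy, _, ⟨z, rfl⟩, hyz⟩ :=
    Submodule.mem_sup.mp (hcompl.codisjoint.eq_top ▸ Submodule.mem_top (x := (1 : A)))
  set e := (f ^ n) z
  -- `1 = y + e` along the Fitting decomposition `A = ker (f ^ n) ⊕ range (f ^ n)` of left ideals
  have he : IsIdempotentElem e := by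
    have hker : e - e * e ∈ LinearMap.ker (f ^ n) := by
      rw [show e - e * e = e * y by rw [← sub_eq_iff_eq_add.mpr hyz.symm]; noncomm_ring]
      exact Submodule.smul_mem _ e hy
    have hrange : e - e * e ∈ LinearMap.range (f ^ n) :=
      Submodule.sub_mem _ ⟨z, rfl⟩ (Submodule.smul_mem _ e ⟨z, rfl⟩)
    exact (sub_eq_zero.mp (Submodule.disjoint_def.mp hcompl.disjoint _ hker hrange)).symm
  rcases hidem e he with h0 | h1
  · refine Or.inr ⟨n, ?_⟩
    rw [h0, add_zero] at hyz
    simpa [hyz, hf] using hy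
  · refine Or.inl ((isUnit_pow_iff N.succ_ne_zero).mp (IsUnit.of_mul_eq_one_right z ?_))
    rwa [← hf]

theorem IsLocalRing.of_forall_isIdempotentElem [Nontrivial A]
    (hidem : ∀ e : A, IsIdempotentElem e → e = 0 ∨ e = 1) : IsLocalRing A :=
  .of_isUnit_or_isUnit_one_sub_self fun a =>
    (isUnit_or_isNilpotent_of_forall_isIdempotentElem hidem a).imp_right IsNilpotent.isUnit_one_sub

end Fitting

theorem IsLocalRing.of_ringEquiv {R R' : Type*} [Semiring R] [Semiring R'] [IsLocalRing R]
    (e : R ≃+* R') : IsLocalRing R' :=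
  have : Nontrivial R' := e.injective.nontrivial
  .of_isUnit_or_isUnit_of_isUnit_add fun a b hab => by
    have := isUnit_or_isUnit_of_isUnit_add (a := e.symm a) (b := e.symm b)
      (by rw [← map_add]; exact hab.map e.symm)
    simpa using this.imp (·.map e) (·.map e)

theorem Submodule.smul_mem_of_covBy {A M : Type*} [Ring A] [IsLocalRing A] [IsArtinianRing A]
    [AddCommGroup M] [Module A M] {N N' : Submodule A M} (h : N' ⋖ N) {x : M} (hxN : x ∈ N)
    (hxN' : x ∉ N') {u : A} (hu : ¬ IsUnit u) : u • x ∈ N' := by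
  by_contra hux
  have hsup : N' ⊔ span A {u • x} = N :=
    (h.eq_or_eq le_sup_left (sup_le h.le ((span_singleton_le_iff_mem _ _).mpr
      (N.smul_mem u hxN)))).resolve_left fun h' => hux (h' ▸ mem_sup_right
        (mem_span_singleton_self _))
  obtain ⟨y, hy, _, hv, hxy⟩ := mem_sup.mp (hsup ▸ hxN)
  obtain ⟨v, rfl⟩ := mem_span_singleton.mp hv
  -- `x = y + (v * u) • x`, and `1 - v * u` is a unit because `v * u` is not
  have hvu : ¬ IsUnit (v * u) := fun h => hu (isUnit_of_mul_isUnit_right h)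
  obtain ⟨w, hw⟩ := (IsLocalRing.isUnit_or_isUnit_of_add_one (sub_add_cancel 1 _)).resolve_right hvu
  have hy' : (1 - v * u) • x = y := by rw [sub_smul, one_smul, mul_smul, sub_eq_iff_eq_add, hxy]
  apply hxN'
  rw [← inv_smul_smul w x, Units.smul_def w, hw, hy']
  exact N'.smul_mem _ hy

theorem Module.length_le_finrank {k A M : Type*} [Field k] [Ring A] [Algebra k A]
    [AddCommGroup M] [Module A M] [Module k M] [IsScalarTower k A M] [FiniteDimensional k M] :
    Module.length A M ≤ finrank k M := by
  rw [← Module.length_eq_finrank, Module.length_eq_height, Module.length_eq_height,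
    ← Submodule.restrictScalars_top k A M]
  exact Order.height_le_height_apply_of_strictMono _
    (Submodule.restrictScalarsEmbedding k A M).strictMono ⊤

theorem RingEquiv.length_self_eq {A B : Type*} [Ring A] [Ring B] (e : A ≃+* B) :
    Module.length A A = Module.length B B := by
  have := RingHomInvPair.of_ringEquiv e
  have := RingHomInvPair.symm (e : A →+* B) e.symm
  rw [Module.length_eq_height, Module.length_eq_height,
    ← Order.height_orderIso (Submodule.orderIsoMapComap e.toSemilinearEquiv) ⊤, OrderIso.map_top]

theorem exists_eq_algebraMap_add_not_isUnit {k A : Type*} [Field k] [IsAlgClosed k] [Ring A]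
    [Nontrivial A] [Algebra k A] [FiniteDimensional k A] (b : A) :
    ∃ (c : k) (u : A), ¬ IsUnit u ∧ b = algebraMap k A c + u := by
  obtain ⟨c, hc⟩ := spectrum.nonempty_of_isAlgClosed_of_finiteDimensional k b
  exact ⟨c, b - algebraMap k A c, fun h => spectrum.mem_iff.mp hc (by simpa using h.neg),
    by abel⟩

section LocalAlgebra

variable {k A : Type*} [Field k] [IsAlgClosed k] [Ring A] [Algebra k A] [FiniteDimensional k A]
  [IsLocalRing A]

variable {M : Type*} [AddCommGroup M] [Module A M] [Module k M] [IsScalarTower k A M]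
  [FiniteDimensional k M]

theorem Submodule.finrank_restrictScalars_le_of_covBy {N N' : Submodule A M} (h : N' ⋖ N) :
    finrank k (N.restrictScalars k) ≤ finrank k (N'.restrictScalars k) + 1 := by
  have := IsArtinianRing.of_finite k A
  obtain ⟨x, hxN, hxN'⟩ := SetLike.exists_of_lt h.lt
  have hsup : N' ⊔ span A {x} = N :=
    (h.eq_or_eq le_sup_left (sup_le h.le ((span_singleton_le_iff_mem _ _).mpr hxN))).resolve_left
      fun h' => hxN' (h' ▸ mem_sup_right (mem_span_singleton_self _))
  -- every `b • x` lies in `k ∙ x + N'`, since `b` is a scalar plus a nonunit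
  have hle : N.restrictScalars k ≤ N'.restrictScalars k ⊔ span k {x} := by
    intro y hy
    obtain ⟨y', hy', _, hb, rfl⟩ := mem_sup.mp (hsup ▸ hy)
    obtain ⟨b, rfl⟩ := mem_span_singleton.mp hb
    obtain ⟨c, u, hu, rfl⟩ := exists_eq_algebraMap_add_not_isUnit (k := k) b
    rw [add_smul, algebraMap_smul, add_left_comm]
    exact add_mem (mem_sup_right (smul_mem _ c (mem_span_singleton_self x)))
      (add_mem (mem_sup_left hy') (mem_sup_left (smul_mem_of_covBy h hxN hxN' hu)))
  calc finrank k (N.restrictScalars k)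
      ≤ finrank k ↥(N'.restrictScalars k ⊔ span k {x}) := finrank_mono hle
    _ ≤ finrank k (N'.restrictScalars k) + finrank k (span k {x}) :=
      finrank_add_le_finrank_add_finrank _ _
    _ = finrank k (N'.restrictScalars k) + 1 := by
      rw [finrank_span_singleton (v := x) fun hx => hxN' (hx ▸ N'.zero_mem)]

variable (M) in
theorem finrank_le_length : (finrank k M : ℕ∞) ≤ Module.length A M := by
  have : IsArtinian A M := isArtinian_of_tower k inferInstance
  have : IsNoetherian A M := isNoetherian_of_tower k inferInstance
  have key (N : Submodule A M) : (finrank k (N.restrictScalars k) : ℕ∞) ≤ Order.height N := by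
    induction N using WellFoundedLT.induction with
    | _ N ih =>
      rcases eq_or_ne N ⊥ with rfl | hN
      · rw [Submodule.restrictScalars_bot, finrank_bot k M]; exact zero_le
      obtain ⟨N', -, hN'⟩ := exists_le_covBy_of_lt (bot_lt_iff_ne_bot.mpr hN)
      calc (finrank k (N.restrictScalars k) : ℕ∞)
          ≤ finrank k (N'.restrictScalars k) + 1 := by
            exact_mod_cast Submodule.finrank_restrictScalars_le_of_covBy hN'
        _ ≤ Order.height N' + 1 := by gcongr; exact ih N' hN'.lt
        _ ≤ Order.height N := Order.height_add_one_le hN'.lt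
  have htop : finrank k ((⊤ : Submodule A M).restrictScalars k) = finrank k M := by
    rw [Submodule.restrictScalars_top]; exact finrank_top k M
  rw [Module.length_eq_height, ← htop]
  exact key ⊤

theorem finrank_le_finrank_of_ringEquiv {B : Type*} [Ring B] [Algebra k B] [FiniteDimensional k B]
    (e : A ≃+* B) : finrank k A ≤ finrank k B := by
  have : (finrank k A : ℕ∞) ≤ finrank k B :=
    calc (finrank k A : ℕ∞) ≤ Module.length A A := finrank_le_length A
      _ = Module.length B B := e.length_self_eq
      _ ≤ finrank k B := Module.length_le_finrank
  exact_mod_cast this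

end LocalAlgebra

namespace CategoryTheory

noncomputable def Functor.FullyFaithful.ringEquivEnd {C D : Type*} [Category C] [Category D]
    [Preadditive C] [Preadditive D] {F : C ⥤ D} (hF : F.FullyFaithful) [F.Additive] (X : C) :
    End X ≃+* End (F.obj X) :=
  { hF.mulEquivEnd X with map_add' := fun _ _ => F.map_add }

section SerrePairing

variable {k : Type*} [Field k] {T : Type u} [Category.{v} T] [Preadditive T] [Linear k T]
  (S : T ⥤ T) (tr : ∀ A : T, (A ⟶ S.obj A) →ₗ[k] k)

def serrePairing (A B : T) : (A ⟶ B) →ₗ[k] Module.Dual k (B ⟶ S.obj A) :=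
  (Linear.comp A B (S.obj A)).compr₂ (tr A)

@[simp]
theorem serrePairing_apply {A B : T} (f : A ⟶ B) (g : B ⟶ S.obj A) :
    serrePairing S tr A B f g = tr A (f ≫ g) :=
  rfl

variable {S tr}

theorem serrePairing_injective {A B : T}
    (nondeg : ∀ f : A ⟶ B, f ≠ 0 → ∃ g : B ⟶ S.obj A, tr A (f ≫ g) ≠ 0) :
    Function.Injective (serrePairing S tr A B) := by
  refine (injective_iff_map_eq_zero _).mpr fun f hf => by_contra fun hf0 => ?_
  obtain ⟨g, hg⟩ := nondeg f hf0
  exact hg (by simpa using LinearMap.congr_fun hf g)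

theorem finrank_hom_le_of_nondegenerate {A B : T} [FiniteDimensional k (B ⟶ S.obj A)]
    (nondeg : ∀ f : A ⟶ B, f ≠ 0 → ∃ g : B ⟶ S.obj A, tr A (f ≫ g) ≠ 0) :
    finrank k (A ⟶ B) ≤ finrank k (B ⟶ S.obj A) := by
  have := LinearMap.finrank_le_finrank_of_injective (serrePairing_injective nondeg)
  rwa [Subspace.dual_finrank_eq] at this

theorem serrePairing_bijective [IsAlgClosed k] (hfin : ∀ A B : T, FiniteDimensional k (A ⟶ B))
    [S.Full] [S.Faithful] [S.Additive]
    (nondeg : ∀ (A B : T) (f : A ⟶ B), f ≠ 0 → ∃ g : B ⟶ S.obj A, tr A (f ≫ g) ≠ 0)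
    {X : T} (hXnz : ¬ IsZero X) (hXind : ∀ p : End X, IsIdempotentElem p → p = 0 ∨ p = 1) :
    Function.Bijective (serrePairing S tr X X) := by
  have : FiniteDimensional k (End X) := hfin X X
  have : FiniteDimensional k (End (S.obj X)) := hfin (S.obj X) (S.obj X)
  have : Nontrivial (End X) := ⟨⟨𝟙 X, 0, (IsZero.iff_id_eq_zero X).not.mp hXnz⟩⟩
  have : IsArtinianRing (End X) := .of_finite k (End X)
  have : IsNoetherianRing (End X) := isNoetherian_of_tower k inferInstance
  have : IsLocalRing (End X) := .of_forall_isIdempotentElem hXind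
  let e := (Functor.FullyFaithful.ofFullyFaithful S).ringEquivEnd X
  have : IsLocalRing (End (S.obj X)) := .of_ringEquiv e
  have h₁ : finrank k (X ⟶ X) ≤ finrank k (X ⟶ S.obj X) :=
    finrank_hom_le_of_nondegenerate (nondeg X X)
  have h₂ : finrank k (X ⟶ S.obj X) ≤ finrank k (S.obj X ⟶ S.obj X) :=
    finrank_hom_le_of_nondegenerate (nondeg X (S.obj X))
  have h₃ : finrank k (End (S.obj X)) ≤ finrank k (End X) := finrank_le_finrank_of_ringEquiv e.symm
  have hinj := serrePairing_injective (nondeg X X)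
  refine ⟨hinj, (LinearMap.injective_iff_surjective_of_finrank_eq_finrank ?_).mp hinj⟩
  rw [Subspace.dual_finrank_eq]
  exact le_antisymm h₁ (h₂.trans h₃)

theorem exists_comp_eq_of_forall_comp_eq_zero {X Y : T}
    (hsurj : Function.Surjective (serrePairing S tr X X))
    (nondeg : ∀ h : X ⟶ Y, h ≠ 0 → ∃ g : Y ⟶ S.obj X, tr X (h ≫ g) ≠ 0)
    (f : X ⟶ Y) {s : X ⟶ S.obj X} (hs : ∀ r : X ⟶ X, r ≫ f = 0 → tr X (r ≫ s) = 0) :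
    ∃ g : Y ⟶ S.obj X, f ≫ g = s := by
  by_contra! hcon
  have hs' : s ∉ LinearMap.range (Linear.leftComp k (S.obj X) f) := fun ⟨g, hg⟩ => hcon g hg
  obtain ⟨ψ, hψs, hψ⟩ := Submodule.exists_dual_map_eq_bot_of_notMem hs' inferInstance
  obtain ⟨r, rfl⟩ := hsurj ψ
  have hrf : r ≫ f = 0 := by
    by_contra hrf
    obtain ⟨g, hg⟩ := nondeg _ hrf
    have hψg := hψ ▸ Submodule.mem_map_of_mem (f := serrePairing S tr X X r)
      (LinearMap.mem_range_self (Linear.leftComp k (S.obj X) f) g)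
    exact hg (by simpa using hψg)
  exact hψs (by simpa using hs r hrf)

end SerrePairing

end CategoryTheory

/-- In a `k`-linear, Karoubi closed triangulated category with finite-dimensional
morphism spaces over an algebraically closed field, with a Serre functor `S` (encoded by
its trace functionals `tr A : Hom(A, S A) → k` and the nondegeneracy of the induced
Serre pairing `Hom(A,B) ⊗ Hom(B, S A) → k`), let `X` be an indecomposable object and
`ε_X : X ⟶ S X` the morphism dual to the functional `End(X) → End(X)/Rad ≅ k` sending
the identity to `1`.  Then every nonzero morphism `f : X ⟶ Y` can be completed to
`ε_X`: there is `g : Y ⟶ S X` with `g ∘ f = ε_X`. -/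
theorem serre_extend {k : Type*} [Field k] [IsAlgClosed k]
    {T : Type u} [Category.{v} T] [HasZeroObject T] [HasShift T ℤ] [Preadditive T]
    [∀ n : ℤ, (shiftFunctor T n).Additive] [Pretriangulated T]
    [Linear k T] [IsIdempotentComplete T]
    (hfin : ∀ A B : T, FiniteDimensional k (A ⟶ B))
    (S : T ⥤ T) [S.IsEquivalence] [S.Additive]
    (tr : ∀ A : T, (A ⟶ S.obj A) →ₗ[k] k)
    (nondeg : ∀ (A B : T) (f : A ⟶ B), f ≠ 0 → ∃ g : B ⟶ S.obj A, tr A (f ≫ g) ≠ 0)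
    (X : T) (hXnz : ¬ IsZero X)
    (hXind : ∀ p : X ⟶ X, p ≫ p = p → p = 0 ∨ p = 𝟙 X)
    (εX : X ⟶ S.obj X) (hε1 : tr X εX = 1)
    (hεrad : ∀ r : X ⟶ X, ¬ IsIso r → tr X (r ≫ εX) = 0)
    (Y : T) (f : X ⟶ Y) (hf : f ≠ 0) :
    ∃ g : Y ⟶ S.obj X, f ≫ g = εX := by
  refine exists_comp_eq_of_forall_comp_eq_zero (serrePairing_bijective hfin nondeg hXnz hXind).2
    (nondeg X Y) f fun r hrf => hεrad r fun _ => hf ?_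
  simpa using congr(inv r ≫ $hrf)
end

section
/- Let k be an algebraically closed field and T a k-linear, Karoubi closed triangulated category with finite-dimensional morphism spaces and a Serre functor S. Let X be an indecomposable object, G an object of which X is not a direct summand, and ε_X : X → S(X) the canonical morphism dual to the projection End(X) → End(X)/Rad End(X) ≅ k. Then ε_X is G-ghost: for every morphism α : G[j] → X, the composition ε_X ∘ α is zero. -/
/-!
Write `h = α ≫ ε_X : G⟦j⟧ ⟶ S X`. Every composite `X ⟶ G⟦j⟧ ⟶ X` is a non-isomorphism
(otherwise `X` would be a summand of `G⟦j⟧`), so `tr_X` kills every morphism `X ⟶ S X` factoring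
through `h`. Using the cone of `h` and the nondegeneracy of the pairing `tr_X (u ≫ t)`, this
produces an endomorphism `ρ` of `S X` with `h ≫ ρ = 0` and `tr_X (v ≫ ρ) = tr_X v` for all `v`.
As `End (S X) ≅ End X` is a finite-dimensional algebra without nontrivial idempotents, `ρ` is a
unit or nilpotent. If it is a unit, `h = 0`; if it is nilpotent,
`tr_X ε_X = tr_X (ε_X ≫ ρ ^ n) = 0`, contradicting `tr_X ε_X = 1`.
-/

open CategoryTheory Limits Pretriangulated

universe v u

open Polynomial in
theorem IsAlgebraic.isUnit_or_isNilpotent {k A : Type*} [Field k] [Ring A] [Algebra k A]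
    (hA : ∀ e : A, IsIdempotentElem e → e = 0 ∨ e = 1) {ρ : A} (hρ : IsAlgebraic k ρ) :
    IsUnit ρ ∨ IsNilpotent ρ := by
  obtain ⟨μ, hμ0, hμρ⟩ := hρ
  obtain ⟨ν, hμ, hν⟩ := μ.exists_eq_pow_rootMultiplicity_mul_and_not_dvd hμ0 0
  rw [map_zero, sub_zero] at hμ hν
  -- `X * μ` also annihilates `ρ`, and its `X`-primary part `X ^ s` has `s ≥ 1`.
  set s := μ.rootMultiplicity 0 + 1
  have hann : aeval ρ (X ^ s * ν) = 0 := by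
    rw [pow_succ', mul_assoc, ← hμ, map_mul, hμρ, mul_zero]
  obtain ⟨a, b, hab⟩ := (irreducible_X.coprime_iff_not_dvd.2 hν).pow_left (m := s)
  have he : IsIdempotentElem (aeval ρ (a * X ^ s)) := by
    have : (a * X ^ s) * (a * X ^ s) = a * X ^ s - a * b * (X ^ s * ν) := by
      linear_combination (a * X ^ s) * hab
    rw [IsIdempotentElem, ← map_mul, this, map_sub, map_mul _ (a * b), hann, mul_zero, sub_zero]
  rcases hA _ he with h0 | h1
  · right
    refine ⟨s, ?_⟩
    have : (X ^ s : k[X]) = X ^ s * (a * X ^ s) + b * (X ^ s * ν) := by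
      linear_combination (-X ^ s) * hab
    rw [← aeval_X_pow (R := k), this, map_add, map_mul, map_mul _ b, h0, hann, mul_zero,
      mul_zero, add_zero]
  · left
    have h1' : aeval ρ (X ^ s * a) = 1 := by rwa [mul_comm]
    have hu : IsUnit (ρ ^ s) := isUnit_iff_exists.2
      ⟨aeval ρ a, by rwa [map_mul, aeval_X_pow] at h1', by rwa [map_mul, aeval_X_pow] at h1⟩
    exact (isUnit_pow_iff (Nat.succ_ne_zero _)).1 hu

theorem LinearMap.exists_eq_flip_comp_of_ker_le {k V U W : Type*} [Field k]
    [AddCommGroup V] [Module k V] [AddCommGroup U] [Module k U] [AddCommGroup W] [Module k W]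
    [FiniteDimensional k U] {P : V →ₗ[k] U} {φ : Module.Dual k V}
    (hker : LinearMap.ker P ≤ LinearMap.ker φ) {B : U →ₗ[k] W →ₗ[k] k}
    (hB : Function.Injective B) : ∃ w, ∀ v, φ v = B (P v) w := by
  obtain ⟨ξ, rfl⟩ : φ ∈ LinearMap.range P.dualMap := by
    rw [range_dualMap_eq_dualAnnihilator_ker, Submodule.mem_dualAnnihilator]
    exact fun v hv => hker hv
  obtain ⟨w, rfl⟩ := LinearMap.flip_surjective_iff₁.2 hB ξ
  exact ⟨w, fun v => rfl⟩

namespace CategoryTheory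

theorem Functor.eq_zero_or_eq_one_of_isIdempotentElem {C D : Type*} [Category C] [Category D]
    [HasZeroMorphisms C] [Preadditive D] (F : C ⥤ D) [F.Full] [F.Faithful] {X : C}
    (hX : ∀ p : X ⟶ X, p ≫ p = p → p = 0 ∨ p = 𝟙 X) (e : End (F.obj X))
    (he : IsIdempotentElem e) : e = 0 ∨ e = 1 := by
  obtain ⟨p, rfl⟩ := F.map_surjective (e : F.obj X ⟶ F.obj X)
  have hp : p ≫ p = p := F.map_injective (by rw [F.map_comp]; exact he)
  rcases hX p hp with rfl | rfl
  · exact Or.inl (F.map_zero X X)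
  · exact Or.inr (F.map_id X)

theorem apply_comp_pow_eq {C α : Type*} [Category C] {Y B : C} (φ : (Y ⟶ B) → α) {ρ : End B}
    (hρ : ∀ v : Y ⟶ B, φ (v ≫ ρ) = φ v) (n : ℕ) (v : Y ⟶ B) :
    φ (v ≫ (ρ ^ n : End B)) = φ v := by
  induction n generalizing v with
  | zero => rw [pow_zero, End.one_def, Category.comp_id]
  | succ n ih => rw [pow_succ, End.mul_def, ← Category.assoc, ih, hρ]

namespace Pretriangulated

variable {k : Type*} [Field k] {C : Type*} [Category C] [Preadditive C] [HasZeroObject C]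
  [HasShift C ℤ] [∀ n : ℤ, (shiftFunctor C n).Additive] [Pretriangulated C] [Linear k C]

theorem exists_comp_eq_zero_and_apply_comp_eq {Y A B : C}
    [∀ Z : C, FiniteDimensional k (Y ⟶ Z)] (h : A ⟶ B) (φ : (Y ⟶ B) →ₗ[k] k)
    (hφ : ∀ f : Y ⟶ A, φ (f ≫ h) = 0)
    (hnondeg : ∀ (Z : C) (u : Y ⟶ Z), u ≠ 0 → ∃ t : Z ⟶ B, φ (u ≫ t) ≠ 0) :
    ∃ ρ : B ⟶ B, h ≫ ρ = 0 ∧ ∀ v : Y ⟶ B, φ (v ≫ ρ) = φ v := by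
  -- With `p : B ⟶ Z` the next map in a triangle on `h`, `φ` factors through `v ↦ v ≫ p`, and
  -- nondegeneracy writes the factor as `u ↦ φ (u ≫ t)`; then `ρ = p ≫ t`.
  obtain ⟨Z, p, q, hT⟩ := distinguished_cocone_triangle h
  have hker : LinearMap.ker (Linear.rightComp k Y p) ≤ LinearMap.ker φ := fun v hv => by
    obtain ⟨f, rfl⟩ := Triangle.coyoneda_exact₂ _ hT v hv
    exact hφ f
  have hB : Function.Injective ((Linear.comp (S := k) Y Z B).compr₂ φ) := by
    rw [← LinearMap.ker_eq_bot, LinearMap.ker_eq_bot']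
    intro u hu
    by_contra hu0
    obtain ⟨t, ht⟩ := hnondeg Z u hu0
    exact ht (LinearMap.congr_fun hu t)
  obtain ⟨t, ht⟩ := LinearMap.exists_eq_flip_comp_of_ker_le hker hB
  have hhp : h ≫ p = 0 := comp_distTriang_mor_zero₁₂ _ hT
  refine ⟨p ≫ t, by rw [← Category.assoc, hhp, zero_comp], fun v => ?_⟩
  rw [ht v, ← Category.assoc]
  rfl

end Pretriangulated

end CategoryTheory

/-- In a `k`-linear, Karoubi closed triangulated category with finite-dimensional
morphism spaces and a Serre functor `S` (encoded by its trace functionals and the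
characterizing properties of the canonical morphism `ε_X`), if `X` is indecomposable
and `X` is not a direct summand of (a shift of) `G`, then `ε_X : X ⟶ S X` is
`G`-ghost: `ε_X ∘ α = 0` for every `α : G⟦j⟧ ⟶ X`. -/
theorem serre_morphism_ghost {k : Type*} [Field k] [IsAlgClosed k]
    {T : Type u} [Category.{v} T] [HasZeroObject T] [HasShift T ℤ] [Preadditive T]
    [∀ n : ℤ, (shiftFunctor T n).Additive] [Pretriangulated T]
    [Linear k T] [IsIdempotentComplete T]
    (hfin : ∀ A B : T, FiniteDimensional k (A ⟶ B))
    (S : T ⥤ T) [S.IsEquivalence] [S.Additive]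
    (tr : ∀ A : T, (A ⟶ S.obj A) →ₗ[k] k)
    (nondeg : ∀ (A B : T) (f : A ⟶ B), f ≠ 0 → ∃ g : B ⟶ S.obj A, tr A (f ≫ g) ≠ 0)
    (X : T) (hXnz : ¬ IsZero X)
    (hXind : ∀ p : X ⟶ X, p ≫ p = p → p = 0 ∨ p = 𝟙 X)
    (εX : X ⟶ S.obj X) (hε1 : tr X εX = 1)
    (hεrad : ∀ r : X ⟶ X, ¬ IsIso r → tr X (r ≫ εX) = 0)
    (G : T)
    (hnotsummand : ∀ j : ℤ, ¬ ∃ (r : X ⟶ (G⟦j⟧ : T)) (s : (G⟦j⟧ : T) ⟶ X), r ≫ s = 𝟙 X)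
    (j : ℤ) (α : (G⟦j⟧ : T) ⟶ X) :
    α ≫ εX = 0 := by
  have hvanish (f : X ⟶ G⟦j⟧) : tr X (f ≫ α ≫ εX) = 0 := by
    rw [← Category.assoc]
    exact hεrad _ fun _ =>
      hnotsummand j ⟨f, α ≫ inv (f ≫ α), by rw [← Category.assoc, IsIso.hom_inv_id]⟩
  have := hfin X
  obtain ⟨ρ, hkill, hinv⟩ := Pretriangulated.exists_comp_eq_zero_and_apply_comp_eq (α ≫ εX)
    (tr X) hvanish (nondeg X)
  have : Module.Finite k (End (S.obj X)) := hfin _ _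
  rcases IsAlgebraic.isUnit_or_isNilpotent (S.eq_zero_or_eq_one_of_isIdempotentElem hXind)
    (Algebra.IsAlgebraic.isAlgebraic (R := k) (ρ : End (S.obj X))) with hunit | ⟨n, hn⟩
  · have := (isUnit_iff_isIso ρ).1 hunit
    exact (cancel_mono ρ).1 (hkill.trans zero_comp.symm)
  · have := apply_comp_pow_eq (tr X) hinv n εX
    rw [hn, comp_zero, map_zero, hε1] at this
    exact (zero_ne_one this).elim
end
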